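/- arXiv:2106.05548 — 3 statements merged into one kernel-verified Lean document; each statement's English description precedes it below -/
import Mathlib

section
/- Let R be a commutative ring, n ≥ 2, G an abelian group, and φ : Um_n(R) → G a map satisfying MS1 (φ(vε) = φ(v) for every ε ∈ E_n(R) and v ∈ Um_n(R)) and MS4 (φ(f², a₂,…,aₙ)·φ(g, a₂,…,aₙ) = φ(f²g, a₂,…,aₙ) whenever all rows involved are unimodular). If φ satisfies MS5 (φ(r, a₂,…,aₙ)·φ(1+q, a₂,…,aₙ) = φ(q, a₂,…,aₙ) whenever r(1+q) ≡ q mod (a₂,…,aₙ) and all rows involved are unimodular), then φ satisfies MS3: φ(x, a₂,…,aₙ)·φ(y, a₂,…,aₙ) = φ(xy, a₂,…,aₙ) whenever x + y = 1 and all rows involved are unimodular. -/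
/-- A row `v` of length `n` over a commutative ring is *unimodular* if there is a row `w`
with `∑ i, v i * w i = 1`. -/
def IsUnimodular {R : Type*} [CommRing R] {n : ℕ} (v : Fin n → R) : Prop :=
  ∃ w : Fin n → R, ∑ i, v i * w i = 1

/-- `ε` lies in the elementary group `E_n(R)`, i.e. the (sub)group of `GL_n(R)` generated by
the elementary matrices `e_{ij}(λ) = I + λ E_{ij}` (`i ≠ j`).  Since the generating set is
closed under inverses, this coincides with the multiplicative closure. -/
def IsElementary {R : Type*} [CommRing R] {n : ℕ} (ε : Matrix (Fin n) (Fin n) R) : Prop :=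
  ε ∈ Submonoid.closure {M : Matrix (Fin n) (Fin n) R |
    ∃ (i j : Fin n) (c : R), i ≠ j ∧ M = Matrix.transvection i j c}

/-- An `m × n` matrix is right invertible (i.e. lies in `Um_{m,n}(R)`) if it has a right
inverse. -/
def RightInvertible {R : Type*} [CommRing R] {m n : ℕ} (A : Matrix (Fin m) (Fin n) R) : Prop :=
  ∃ B : Matrix (Fin n) (Fin m) R, A * B = 1

/-- The stable range condition `sr_k(R)`. -/
def SRCond (R : Type*) [CommRing R] (k : ℕ) : Prop :=
  ∀ a : Fin (k + 1) → R, IsUnimodular a →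
    ∃ c : Fin k → R, IsUnimodular (fun i : Fin k => a i.castSucc + c i * a (Fin.last k))

section MennickeSymbolRelations

variable {R : Type*} [CommRing R] {G : Type*} [CommGroup G] {k : ℕ}

/-- `MS1`: invariance of `φ` under the right action of `E_n(R)` on unimodular rows. -/
def MS1 (φ : (Fin (k + 1) → R) → G) : Prop :=
  ∀ (v : Fin (k + 1) → R) (ε : Matrix (Fin (k + 1)) (Fin (k + 1)) R),
    IsUnimodular v → IsElementary ε → φ (Matrix.vecMul v ε) = φ v

/-- `MS3`: `φ(x,a)·φ(y,a) = φ(xy,a)` whenever `x + y = 1` and all rows involved are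
unimodular. -/
def MS3 (φ : (Fin (k + 1) → R) → G) : Prop :=
  ∀ (x y : R) (a : Fin k → R), x + y = 1 →
    IsUnimodular (Fin.cons x a) → IsUnimodular (Fin.cons y a) →
    IsUnimodular (Fin.cons (x * y) a) →
    φ (Fin.cons x a) * φ (Fin.cons y a) = φ (Fin.cons (x * y) a)

/-- `MS4`: `φ(f²,a)·φ(g,a) = φ(f²g,a)` whenever all rows involved are unimodular. -/
def MS4 (φ : (Fin (k + 1) → R) → G) : Prop :=
  ∀ (f g : R) (a : Fin k → R),
    IsUnimodular (Fin.cons (f ^ 2) a) → IsUnimodular (Fin.cons g a) →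
    IsUnimodular (Fin.cons (f ^ 2 * g) a) →
    φ (Fin.cons (f ^ 2) a) * φ (Fin.cons g a) = φ (Fin.cons (f ^ 2 * g) a)

/-- `MS5`: `φ(r,a)·φ(1+q,a) = φ(q,a)` whenever `r(1+q) ≡ q mod (a₂,…,aₙ)` and all rows
involved are unimodular. -/
def MS5 (φ : (Fin (k + 1) → R) → G) : Prop :=
  ∀ (r q : R) (a : Fin k → R),
    r * (1 + q) - q ∈ Ideal.span (Set.range a) →
    IsUnimodular (Fin.cons r a) → IsUnimodular (Fin.cons (1 + q) a) →
    IsUnimodular (Fin.cons q a) →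
    φ (Fin.cons r a) * φ (Fin.cons (1 + q) a) = φ (Fin.cons q a)

end MennickeSymbolRelations

/-! Work modulo `I = (a₂, …, aₙ)`: the row `(x, a)` is unimodular iff `x` is a unit in `R ⧸ I`,
and by MS1 the value `φ(x, a)` only depends on the class of `x` in `R ⧸ I`. Given `x + y = 1`,
choose `v` with `yv ≡ 1`. Then `x(1 + xv) ≡ xv`, `y²(1 + xv) ≡ y` and `y² · xv ≡ xy`, so MS5 and
MS4 give `φ(x)φ(1 + xv) = φ(xv)`, `φ(y²)φ(1 + xv) = φ(y)` and `φ(y²)φ(xv) = φ(xy)`; hence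
`φ(x)φ(y) = φ(y²)φ(x)φ(1 + xv) = φ(y²)φ(xv) = φ(xy)`. -/

section

variable {R : Type*} [CommRing R] {k : ℕ}

lemma isUnimodular_cons_iff_isUnit (x : R) (a : Fin k → R) :
    IsUnimodular (Fin.cons x a) ↔ IsUnit (Ideal.Quotient.mk (Ideal.span (Set.range a)) x) := by
  simp only [IsUnimodular, Fin.sum_univ_succ, Fin.cons_zero, Fin.cons_succ, isUnit_iff_exists_inv,
    Ideal.Quotient.mk_surjective.exists, ← map_mul, ← map_one (Ideal.Quotient.mk _),
    Ideal.Quotient.eq, Ideal.mem_span_range_iff_exists_fun]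
  constructor
  · rintro ⟨w, hw⟩
    exact ⟨w 0, fun i => -w i.succ, by simp only [← hw]; simp [mul_comm]⟩
  · rintro ⟨s, c, hc⟩
    refine ⟨Fin.cons s (-c), ?_⟩
    simp only [Fin.cons_zero, Fin.cons_succ, Pi.neg_apply, mul_neg, Finset.sum_neg_distrib]
    simp only [mul_comm (a _), hc]
    ring

lemma isUnimodular_cons_congr {x x' : R} {a : Fin k → R}
    (h : x' - x ∈ Ideal.span (Set.range a)) :
    IsUnimodular (Fin.cons x' a) ↔ IsUnimodular (Fin.cons x a) := by
  rw [isUnimodular_cons_iff_isUnit, isUnimodular_cons_iff_isUnit, Ideal.Quotient.eq.2 h]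

lemma vecMul_cons_transvection_succ_zero (x c : R) (a : Fin k → R) (m : Fin k) :
    Matrix.vecMul (Fin.cons x a) (Matrix.transvection m.succ 0 c) = Fin.cons (x + a m * c) a := by
  rw [Matrix.transvection, Matrix.vecMul_add, Matrix.vecMul_one]
  ext j
  cases j using Fin.cases with
  | zero => simp [Matrix.vecMul, dotProduct, Matrix.single_apply]
  | succ i => simp [Matrix.vecMul, dotProduct, (Fin.succ_ne_zero i).symm]

variable {G : Type*} {φ : (Fin (k + 1) → R) → G}

lemma MS1.apply_cons_add_mul (h1 : MS1 φ) {x : R} {a : Fin k → R}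
    (hx : IsUnimodular (Fin.cons x a)) (m : Fin k) (c : R) :
    φ (Fin.cons (x + a m * c) a) = φ (Fin.cons x a) := by
  rw [← vecMul_cons_transvection_succ_zero]
  exact h1 _ _ hx (Submonoid.subset_closure ⟨m.succ, 0, c, Fin.succ_ne_zero m, rfl⟩)

lemma MS1.apply_cons_add_sum (h1 : MS1 φ) {x : R} {a : Fin k → R}
    (hx : IsUnimodular (Fin.cons x a)) (c : Fin k → R) (s : Finset (Fin k)) :
    φ (Fin.cons (x + ∑ i ∈ s, c i * a i) a) = φ (Fin.cons x a) := by
  induction s using Finset.induction_on with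
  | empty => simp
  | insert j s hj ih =>
    have hs : ∑ i ∈ s, c i * a i ∈ Ideal.span (Set.range a) :=
      Ideal.sum_mem _ fun i _ => Ideal.mul_mem_left _ _ (Ideal.subset_span ⟨i, rfl⟩)
    rw [Finset.sum_insert hj, add_comm (c j * a j), ← add_assoc, mul_comm (c j),
      h1.apply_cons_add_mul ((isUnimodular_cons_congr (by simpa using hs)).2 hx), ih]

lemma MS1.apply_cons_eq_of_sub_mem (h1 : MS1 φ) {x x' : R} {a : Fin k → R}
    (hx : IsUnimodular (Fin.cons x a)) (h : x' - x ∈ Ideal.span (Set.range a)) :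
    φ (Fin.cons x' a) = φ (Fin.cons x a) := by
  obtain ⟨c, hc⟩ := Ideal.mem_span_range_iff_exists_fun.1 h
  simpa [hc] using h1.apply_cons_add_sum hx c Finset.univ

variable [CommGroup G]

lemma MS4.apply_mul_of_sub_mem (h4 : MS4 φ) (h1 : MS1 φ) {f g h : R} {a : Fin k → R}
    (hh : IsUnimodular (Fin.cons h a)) (hfg : h - f ^ 2 * g ∈ Ideal.span (Set.range a)) :
    φ (Fin.cons (f ^ 2) a) * φ (Fin.cons g a) = φ (Fin.cons h a) := by
  have hfg' := (isUnimodular_cons_congr hfg).1 hh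
  obtain ⟨hf, hg⟩ := IsUnit.mul_iff.1 (by rwa [isUnimodular_cons_iff_isUnit, map_mul] at hfg')
  rw [← isUnimodular_cons_iff_isUnit] at hf hg
  rw [h4 f g a hf hg hfg', h1.apply_cons_eq_of_sub_mem hfg' hfg]

lemma MS5.apply_mul_of_sub_mem (h5 : MS5 φ) {r q : R} {a : Fin k → R}
    (hq : IsUnimodular (Fin.cons q a)) (hrq : r * (1 + q) - q ∈ Ideal.span (Set.range a)) :
    φ (Fin.cons r a) * φ (Fin.cons (1 + q) a) = φ (Fin.cons q a) := by
  have hrq' := (isUnimodular_cons_congr hrq).2 hq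
  obtain ⟨hr, hq1⟩ := IsUnit.mul_iff.1 (by rwa [isUnimodular_cons_iff_isUnit, map_mul] at hrq')
  rw [← isUnimodular_cons_iff_isUnit] at hr hq1
  exact h5 r q a hrq hr hq1 hq

end

theorem ms5_implies_ms3_general {R : Type*} [CommRing R] {G : Type*} [CommGroup G]
    (k : ℕ) (φ : (Fin (k + 1) → R) → G)
    (h1 : MS1 φ) (h4 : MS4 φ) (h5 : MS5 φ) : MS3 φ := by
  intro x y a hxy _ hy hxy'
  set π := Ideal.Quotient.mk (Ideal.span (Set.range a))
  obtain ⟨v, hv⟩ : ∃ v, π y * π v = 1 := by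
    obtain ⟨w, hw⟩ := ((isUnimodular_cons_iff_isUnit y a).1 hy).exists_right_inv
    obtain ⟨v, rfl⟩ := Ideal.Quotient.mk_surjective w
    exact ⟨v, hw⟩
  have hπ : π x + π y = 1 := by rw [← map_add, hxy, map_one]
  have hxv : IsUnimodular (Fin.cons (x * v) a) := by
    rw [isUnimodular_cons_iff_isUnit, map_mul] at hxy' ⊢
    exact (isUnit_of_mul_isUnit_left hxy').mul (IsUnit.of_mul_eq_one_right _ hv)
  have hx1 := h5.apply_mul_of_sub_mem hxv (r := x) <| Ideal.Quotient.eq.1 <| by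
    simp only [map_mul, map_add, map_one]
    linear_combination (-π x) * hv + (π x * π v) * hπ
  have hy1 := h4.apply_mul_of_sub_mem h1 hy (f := y) (g := 1 + x * v) <| Ideal.Quotient.eq.1 <| by
    simp only [map_mul, map_add, map_one, map_pow]
    linear_combination (-π y) * hπ - (π x * π y) * hv
  have hyx := h4.apply_mul_of_sub_mem h1 hxy' (f := y) (g := x * v) <| Ideal.Quotient.eq.1 <| by
    simp only [map_mul, map_pow]
    linear_combination (-(π x * π y)) * hv
  rw [← hy1, mul_left_comm, hx1, hyx]

/-- Under `MS1` and `MS4`, relation `MS5` implies relation `MS3`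
(van der Kallen, Lemma 3.1, direction ⇐). -/
theorem ms5_implies_ms3 {R : Type*} [CommRing R] {G : Type*} [CommGroup G]
    (k : ℕ) (hk : 1 ≤ k) (φ : (Fin (k + 1) → R) → G)
    (h1 : MS1 φ) (h4 : MS4 φ) (h5 : MS5 φ) : MS3 φ :=
  ms5_implies_ms3_general k φ h1 h4 h5
end

section
/- Let R be a commutative ring, n ≥ 2, for which the stable range condition sr_{2n−2}(R) holds. Let v, w ∈ Um_n(R). Then there exist ε, δ ∈ E_n(R) such that the first coordinates of vε and wδ sum to 1, i.e. (vε)₁ + (wδ)₁ = 1. -/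
/-!
Write `v = (v₀, v')` and `w = (w₀, w')`. Since `v` and `w` are unimodular, so is the row
`(v', w', v₀w₀)` of length `2n - 1`, and `sr_{2n-2}` yields `c, z` with
`⟨v' + c'v₀w₀, z'⟩ + ⟨w' + c''v₀w₀, z''⟩ = 1`. Row operations turn `v'` into
`v' + v₀(c'w₀)` and `w'` into `w' + w₀(c''v₀)`; column operations then add `u⟨·, z'⟩`,
resp. `u⟨·, z''⟩`, to the first coordinates, where `u = 1 - v₀ - w₀`. The first
coordinates now sum to `v₀ + w₀ + u = 1`.
-/

open Matrix

section

variable {R : Type*} [CommRing R]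

theorem isUnimodular_snoc_append_tail_mul {m n : ℕ} {v : Fin (m + 1) → R}
    {w : Fin (n + 1) → R} (hv : IsUnimodular v) (hw : IsUnimodular w) :
    IsUnimodular (Fin.snoc (Fin.append (Fin.tail v) (Fin.tail w)) (v 0 * w 0) :
      Fin (m + n + 1) → R) := by
  obtain ⟨p, hp⟩ := hv
  obtain ⟨q, hq⟩ := hw
  rw [Fin.sum_univ_succ] at hp hq
  refine ⟨Fin.snoc (Fin.append (Fin.tail p) fun j : Fin n => v 0 * p 0 * q j.succ) (p 0 * q 0),
    ?_⟩
  simp only [Fin.sum_univ_castSucc, Fin.snoc_castSucc, Fin.snoc_last, Fin.sum_univ_add,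
    Fin.append_left, Fin.append_right, Fin.tail]
  simp only [mul_left_comm _ (v 0 * p 0), ← Finset.mul_sum]
  linear_combination hp + v 0 * p 0 * hq

theorem vecMul_single_apply {m o : Type*} [Fintype m] [DecidableEq m] [DecidableEq o]
    (x : m → R) (i : m) (j l : o) (c : R) :
    (x ᵥ* single i j c) l = if j = l then x i * c else 0 := by
  simp [vecMul, dotProduct, single, ite_and, mul_ite]

variable {n : ℕ}

theorem IsElementary.mul {ε δ : Matrix (Fin n) (Fin n) R} (hε : IsElementary ε)
    (hδ : IsElementary δ) : IsElementary (ε * δ) :=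
  Submonoid.mul_mem _ hε hδ

theorem isElementary_one_add_sum_single {ι : Type*} [DecidableEq ι] (s : Finset ι)
    (r c : ι → Fin n) (hrc : ∀ i, r i ≠ c i) (hcr : ∀ i j, c i ≠ r j) (f : ι → R) :
    IsElementary (1 + ∑ i ∈ s, single (r i) (c i) (f i)) := by
  induction s using Finset.induction_on with
  | empty => rw [Finset.sum_empty, add_zero]; exact Submonoid.one_mem _
  | insert a s has ih =>
    have hprod : (1 + ∑ i ∈ s, single (r i) (c i) (f i)) * transvection (r a) (c a) (f a) =
        1 + ∑ i ∈ insert a s, single (r i) (c i) (f i) := by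
      rw [transvection, Finset.sum_insert has, mul_add, mul_one, add_mul, one_mul,
        Finset.sum_mul,
        Finset.sum_eq_zero fun i _ => single_mul_single_of_ne (f i) _ _ _ (hcr i a) _]
      abel
    exact hprod ▸ ih.mul (Submonoid.subset_closure ⟨r a, c a, f a, hrc a, rfl⟩)

variable {k : ℕ}

theorem vecMul_one_add_sum_single_zero_succ (x : Fin (k + 1) → R) (f : Fin k → R) :
    x ᵥ* (1 + ∑ i, single (0 : Fin (k + 1)) i.succ (f i)) =
      Fin.cons (x 0) fun i => x i.succ + x 0 * f i := by
  ext l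
  cases l using Fin.cases <;>
    simp [vecMul_add, vecMul_sum, vecMul_single_apply, Fin.succ_ne_zero, Fin.succ_inj]

theorem vecMul_one_add_sum_single_succ_zero_apply_zero (x : Fin (k + 1) → R) (d : Fin k → R) :
    (x ᵥ* (1 + ∑ i, single i.succ (0 : Fin (k + 1)) (d i))) 0 =
      x 0 + ∑ i, x i.succ * d i := by
  simp [vecMul_add, vecMul_sum, vecMul_single_apply]

theorem exists_isElementary_vecMul_apply_zero (x : Fin (k + 1) → R) (f d : Fin k → R) :
    ∃ ε, IsElementary ε ∧ (x ᵥ* ε) 0 = x 0 + ∑ i, (x i.succ + x 0 * f i) * d i := by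
  refine ⟨(1 + ∑ i, single 0 i.succ (f i)) * (1 + ∑ i, single i.succ 0 (d i)), ?_, ?_⟩
  · exact (isElementary_one_add_sum_single _ _ _ (fun i => (Fin.succ_ne_zero i).symm)
      (fun i _ => Fin.succ_ne_zero i) f).mul
      (isElementary_one_add_sum_single _ _ _ (fun i => Fin.succ_ne_zero i)
        (fun _ j => (Fin.succ_ne_zero j).symm) d)
  · rw [← vecMul_vecMul, vecMul_one_add_sum_single_zero_succ,
      vecMul_one_add_sum_single_succ_zero_apply_zero]
    simp

end

theorem first_coords_sum_one_general {R : Type*} [CommRing R]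
    (k : ℕ) (hsr : SRCond R (2 * (k + 1) - 2))
    (v w : Fin (k + 1) → R) (hv : IsUnimodular v) (hw : IsUnimodular w) :
    ∃ ε δ : Matrix (Fin (k + 1)) (Fin (k + 1)) R,
      IsElementary ε ∧ IsElementary δ ∧
      Matrix.vecMul v ε 0 + Matrix.vecMul w δ 0 = 1 := by
  rw [show 2 * (k + 1) - 2 = k + k by omega] at hsr
  obtain ⟨c, z, hz⟩ := hsr _ (isUnimodular_snoc_append_tail_mul hv hw)
  simp only [Fin.snoc_castSucc, Fin.snoc_last, Fin.sum_univ_add, Fin.append_left,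
    Fin.append_right, Fin.tail] at hz
  set u := 1 - v 0 - w 0
  obtain ⟨ε, hε, hvε⟩ := exists_isElementary_vecMul_apply_zero v
    (fun i => c (Fin.castAdd k i) * w 0) (fun i => u * z (Fin.castAdd k i))
  obtain ⟨δ, hδ, hwδ⟩ := exists_isElementary_vecMul_apply_zero w
    (fun j => c (Fin.natAdd k j) * v 0) (fun j => u * z (Fin.natAdd k j))
  refine ⟨ε, δ, hε, hδ, ?_⟩
  have hfactor (x : Fin (k + 1) → R) (y : R) (a b : Fin k → R) :
      ∑ i, (x i.succ + x 0 * (a i * y)) * (u * b i) =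
        u * ∑ i, (x i.succ + a i * (x 0 * y)) * b i := by
    rw [Finset.mul_sum]
    exact Finset.sum_congr rfl fun i _ => by ring
  rw [hvε, hwδ, hfactor, hfactor, mul_comm (w 0) (v 0)]
  linear_combination u * hz

/-- Let `R` be a commutative ring, `n = k + 1 ≥ 2`, satisfying the stable range condition
`sr_{2n−2}(R)`.  For `v, w ∈ Um_n(R)` there are `ε, δ ∈ E_n(R)` such that the first
coordinates of `vε` and `wδ` sum to `1`. -/
theorem first_coords_sum_one {R : Type*} [CommRing R]
    (k : ℕ) (hk : 1 ≤ k) (hsr : SRCond R (2 * (k + 1) - 2))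
    (v w : Fin (k + 1) → R) (hv : IsUnimodular v) (hw : IsUnimodular w) :
    ∃ ε δ : Matrix (Fin (k + 1)) (Fin (k + 1)) R,
      IsElementary ε ∧ IsElementary δ ∧
      Matrix.vecMul v ε 0 + Matrix.vecMul w δ 0 = 1 :=
  first_coords_sum_one_general k hsr v w hv hw
end

section
/- Let R be a commutative ring and S, T ∈ Um_{m,n}(R) right invertible m×n matrices of the form S = (Y', β') and T = (Z', β') in the first m−1 rows, where the m-th row of S is (a₁,…,a_{m−1}, a_m,…,a_n) and the m-th row of T is (−a₁,…,−a_{m−1}, b_m,…,b_n). Then the row (a_m·b_m, a_{m+1},…,a_n, b_{m+1},…,b_n, a₁,…,a_{m−1}) of length 2(n−m)+m is unimodular over R. -/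
theorem Fin.range_append {α : Type*} {m n : ℕ} (u : Fin m → α) (v : Fin n → α) :
    Set.range (Fin.append u v) = Set.range u ∪ Set.range v := by
  ext x
  constructor
  · rintro ⟨i, rfl⟩
    induction i using Fin.addCases <;> simp
  · rintro (⟨i, rfl⟩ | ⟨i, rfl⟩)
    exacts [⟨_, Fin.append_left u v i⟩, ⟨_, Fin.append_right u v i⟩]

section

variable {R : Type*} [CommRing R]

theorem isUnimodular_iff_span_range_eq_top {n : ℕ} (v : Fin n → R) :
    IsUnimodular v ↔ Ideal.span (Set.range v) = ⊤ := by
  simp_rw [Ideal.eq_top_iff_one, Ideal.mem_span_range_iff_exists_fun, IsUnimodular, mul_comm]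

theorem RightInvertible.isUnimodular_row {m n : ℕ} {A : Matrix (Fin m) (Fin n) R}
    (hA : RightInvertible A) (i : Fin m) : IsUnimodular (A i) := by
  obtain ⟨B, hB⟩ := hA
  refine ⟨fun j => B j i, ?_⟩
  simpa [Matrix.mul_apply] using congrFun (congrFun hB i) i

theorem Ideal.sup_span_singleton_mul_eq_top {I : Ideal R} {a b : R}
    (ha : I ⊔ Ideal.span {a} = ⊤) (hb : I ⊔ Ideal.span {b} = ⊤) :
    I ⊔ Ideal.span {a * b} = ⊤ := by
  rw [← Ideal.span_singleton_mul_span_singleton, Ideal.sup_mul_eq_of_coprime_left ha, hb]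

theorem Ideal.span_range_neg {ι : Type*} (v : ι → R) :
    Ideal.span (Set.range fun i => -v i) = Ideal.span (Set.range v) := by
  rw [show (Set.range fun i => -v i) = -Set.range v by
    rw [← Set.image_neg_eq_neg, ← Set.range_comp]; rfl]
  exact Submodule.span_neg _

end

theorem unimodular_row_from_last_rows_general {R : Type*} [CommRing R]
    (p k : ℕ) (S T : Matrix (Fin (p + 1)) (Fin (p + (k + 1))) R)
    (hS : RightInvertible S) (hT : RightInvertible T)
    (a1 : Fin p → R) (am : R) (atail : Fin k → R) (bm : R) (btail : Fin k → R)
    (hSrow : S (Fin.last p) = Fin.append a1 (Fin.cons am atail))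
    (hTrow : T (Fin.last p) = Fin.append (fun i => -a1 i) (Fin.cons bm btail)) :
    IsUnimodular (Fin.cons (am * bm) (Fin.append (Fin.append atail btail) a1)) := by
  have hSu := hSrow ▸ hS.isUnimodular_row (Fin.last p)
  have hTu := hTrow ▸ hT.isUnimodular_row (Fin.last p)
  simp only [isUnimodular_iff_span_range_eq_top, Fin.range_append, Fin.range_cons,
    Ideal.span_union, Ideal.span_insert, Ideal.span_range_neg] at hSu hTu ⊢
  rw [sup_comm]
  apply Ideal.sup_span_singleton_mul_eq_top
  · rw [eq_top_iff, ← hSu]; order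
  · rw [eq_top_iff, ← hTu]; order

/-- Let `R` be a commutative ring and `S, T ∈ Um_{m,n}(R)` (`m = p + 1`, `n = p + (k + 1)`)
right invertible matrices whose first `m − 1` rows have the shapes `(Y', β')` and
`(Z', β')` (same `β'` in the last `n − (m−1)` columns), and whose `m`-th rows are
`(a₁,…,a_{m−1}, a_m,…,a_n)` and `(−a₁,…,−a_{m−1}, b_m,…,b_n)` respectively.  Then the row
`(a_m b_m, a_{m+1},…,a_n, b_{m+1},…,b_n, a₁,…,a_{m−1})` of length `2(n−m) + m` is
unimodular. -/
theorem unimodular_row_from_last_rows {R : Type*} [CommRing R]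
    (p k : ℕ) (S T : Matrix (Fin (p + 1)) (Fin (p + (k + 1))) R)
    (hS : RightInvertible S) (hT : RightInvertible T)
    (a1 : Fin p → R) (am : R) (atail : Fin k → R) (bm : R) (btail : Fin k → R)
    (hβ : ∀ (i : Fin p) (j : Fin (k + 1)),
      S i.castSucc (Fin.natAdd p j) = T i.castSucc (Fin.natAdd p j))
    (hSrow : S (Fin.last p) = Fin.append a1 (Fin.cons am atail))
    (hTrow : T (Fin.last p) = Fin.append (fun i => -a1 i) (Fin.cons bm btail)) :
    IsUnimodular (Fin.cons (am * bm) (Fin.append (Fin.append atail btail) a1)) :=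
  unimodular_row_from_last_rows_general p k S T hS hT a1 am atail bm btail hSrow hTrow
end
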